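/- arXiv:math/9812156 — 8 statements merged into one kernel-verified Lean document; each statement's English description precedes it below -/
import Mathlib

section
/- Let Y_i := α_i f_{i,i} + β_i in the algebra T_n, where α_i is invertible in R. Then Y_i is invertible in T_n, with inverse Y_i^{-1} = β_i^{-1}(1 - α_i (β_i + c_{i,i} α_i)^{-1} f_{i,i}), provided β_i and β_i + c_{i,i} α_i are invertible in R. -/
/-- With `Y_i := α_i f_{i,i} + β_i` in `T_n` (where `α_i`, `β_i` and `β_i + c_{i,i} α_i` are
invertible in `R`), the element `Y_i` is invertible in `T_n`, with inverse
`β_i⁻¹ (1 - α_i (β_i + c_{i,i} α_i)⁻¹ f_{i,i})`. -/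
theorem Y_invertible
    (R : Type*) [CommRing R] (n : ℕ) (c : Fin n → Fin n → R)
    (T : Type*) [Ring T] [Algebra R T] (f : Fin n → Fin n → T)
    (hrel : ∀ i j k l, f i j * f k l = c j k • f i l)
    (i : Fin n) (α β γ : Rˣ) (hγ : (γ : R) = (β : R) + c i i * (α : R)) :
    ((α : R) • f i i + (β : R) • 1) *
        (((β⁻¹ : Rˣ) : R) • (1 - ((α : R) * ((γ⁻¹ : Rˣ) : R)) • f i i)) = 1 ∧
    (((β⁻¹ : Rˣ) : R) • (1 - ((α : R) * ((γ⁻¹ : Rˣ) : R)) • f i i)) *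
        ((α : R) • f i i + (β : R) • 1) = 1 := by
  have key := hrel i i i i
  have hb : (β : R) * ((β⁻¹ : Rˣ) : R) = 1 := β.mul_inv
  have hg : (γ : R) * ((γ⁻¹ : Rˣ) : R) = 1 := γ.mul_inv
  constructor <;>
  · simp only [mul_sub, sub_mul, mul_add, add_mul, smul_mul_assoc, mul_smul_comm, smul_smul,
      mul_one, one_mul, key, smul_sub, smul_add]
    rw [show (1 : T) = (1 : R) • (1 : T) by simp]
    match_scalars
    · linear_combination (((β⁻¹ : Rˣ) : R) * (α : R) * ((γ⁻¹ : Rˣ) : R)) * hγ -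
        (((β⁻¹ : Rˣ) : R) * (α : R)) * hg
    · linear_combination hb
end

section
/- With Y_i = α f_{i,i} + β and Y_{i+1} = α f_{i+1,i+1} + β in T_n (all c_{i,j} = c, all α_i = α, all β_i = β, with α, β, β + cα invertible), the element g := α^{-1}(Y_i Y_{i+1} Y_i^{-1} - β) satisfies g² = c·g, i.e., the defining quadratic relation of the generators f_{i,i} is preserved. -/
/-- With `Y_j = α f_{j,j} + β` in `T_n` (all `c_{i,j} = c`, with `α`, `β`, `β + cα`
invertible), the element `g := α⁻¹ (Y_i Y_{i+1} Y_i⁻¹ - β)` satisfies `g² = c g`: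
the defining quadratic relation of the diagonal generators is preserved. -/
theorem conjugate_satisfies_quadratic
    (R : Type*) [CommRing R] (n : ℕ) (c α β γ : Rˣ)
    (hγ : (γ : R) = (β : R) + (c : R) * (α : R))
    (T : Type*) [Ring T] [Algebra R T] (f : Fin n → Fin n → T)
    (hrel : ∀ i j k l, f i j * f k l = (c : R) • f i l)
    (i : ℕ) (hi : i + 1 < n) :
    let ii : Fin n := ⟨i, Nat.lt_of_succ_lt hi⟩
    let jj : Fin n := ⟨i + 1, hi⟩
    let Y : Fin n → T := fun k => (α : R) • f k k + (β : R) • 1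
    let Yinv : Fin n → T := fun k =>
      ((β⁻¹ : Rˣ) : R) • (1 - ((α : R) * ((γ⁻¹ : Rˣ) : R)) • f k k)
    let g : T := ((α⁻¹ : Rˣ) : R) • (Y ii * Y jj * Yinv ii - (β : R) • 1)
    g * g = (c : R) • g := by
  intro ii jj Y Yinv g
  have hb : (β : R) * ((β⁻¹ : Rˣ) : R) = 1 := β.mul_inv
  have ha : (α : R) * ((α⁻¹ : Rˣ) : R) = 1 := α.mul_inv
  have hg : (γ : R) * ((γ⁻¹ : Rˣ) : R) = 1 := γ.mul_inv
  rw [hγ] at hg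
  -- quadratic for Y
  have hquad : ∀ k, Y k * Y k = ((c : R) * α + 2 * β) • Y k - ((β : R) * γ) • 1 := by
    intro k
    simp only [Y, smul_add, smul_smul, mul_add, add_mul, smul_mul_assoc,
      mul_smul_comm, one_mul, mul_one, hrel]
    match_scalars
    · ring
    · linear_combination (β : R) * hγ
  -- inverses
  have hinv : ∀ k, Yinv k * Y k = 1 := by
    intro k
    simp only [Y, Yinv, smul_add, smul_sub, smul_smul, mul_add, add_mul, sub_mul,
      mul_sub, smul_mul_assoc, mul_smul_comm, one_mul, mul_one, hrel]
    match_scalars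
    · linear_combination (-(α : R)*((β⁻¹ : Rˣ) : R)) * hg
    · linear_combination hb
  have hinv' : ∀ k, Y k * Yinv k = 1 := by
    intro k
    simp only [Y, Yinv, smul_add, smul_sub, smul_smul, mul_add, add_mul, sub_mul,
      mul_sub, smul_mul_assoc, mul_smul_comm, one_mul, mul_one, hrel]
    match_scalars
    · linear_combination (-(α : R)*((β⁻¹ : Rˣ) : R)) * hg
    · linear_combination hb
  set W : T := Y ii * Y jj * Yinv ii with hW
  have hW2 : W * W = ((c : R) * α + 2 * β) • W - ((β : R) * γ) • 1 := by
    calc W * W = Y ii * ((Y jj * (Yinv ii * Y ii)) * Y jj) * Yinv ii := by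
            simp only [hW, mul_assoc, mul_one]
      _ = Y ii * (Y jj * Y jj) * Yinv ii := by rw [hinv, mul_one]
      _ = ((c : R) * α + 2 * β) • W - ((β : R) * γ) • (Y ii * Yinv ii) := by
            rw [hquad]; simp only [mul_sub, sub_mul, smul_mul_assoc, mul_smul_comm, hW, mul_one]
      _ = _ := by rw [hinv']
  show (((α⁻¹ : Rˣ) : R) • (W - (β : R) • 1)) * (((α⁻¹ : Rˣ) : R) • (W - (β : R) • 1))
      = (c : R) • (((α⁻¹ : Rˣ) : R) • (W - (β : R) • 1))
  simp only [smul_sub, smul_smul, sub_mul, mul_sub, smul_mul_assoc, mul_smul_comm,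
    one_mul, mul_one, hW2]
  match_scalars
  · linear_combination ((c : R)*((α⁻¹ : Rˣ) : R)) * ha
  · linear_combination (-(((α⁻¹ : Rˣ) : R))^2*(β : R)) * hγ + (-(c : R)*(β : R)*((α⁻¹ : Rˣ) : R)) * ha
end

section
/- The linear operators φ(X_i) on T_n defined by φ(X_i)(f_{j,j}) = f_{j,j} for j ≠ i,i+1, φ(X_i)(f_{i+1,i+1}) = f_{i,i}, φ(X_i)(f_{i,i}) = α^{-1}(Y_i Y_{i+1} Y_i^{-1} − β), φ(X_i)(f_{j,k}) = φ(X_i)(f_{j,j}) φ(X_i)(f_{k,k}) c^{-1} for j ≠ k, and φ(X_i)(1) = 1, are invertible, with inverse given by φ(X_i^{-1})(f_{j,j}) = f_{j,j} for j ≠ i,i+1, φ(X_i^{-1})(f_{i,i}) = f_{i+1,i+1}, φ(X_i^{-1})(f_{i+1,i+1}) = α^{-1}(Y_{i+1}^{-1} Y_i Y_{i+1} − β), φ(X_i^{-1})(f_{j,k}) = φ(X_i^{-1})(f_{j,j}) φ(X_i^{-1})(f_{k,k}) c^{-1} for j ≠ k, and φ(X_i^{-1})(1) = 1. -/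
/-- The braid operator `φ(X_i)` on the algebra `T_n` (with basis `1, f_{j,k}`), defined by
`f_{j,j} ↦ f_{j,j}` for `j ≠ i, i+1`, `f_{i+1,i+1} ↦ f_{i,i}`,
`f_{i,i} ↦ α⁻¹ (Y_i Y_{i+1} Y_i⁻¹ - β)`, `f_{j,k} ↦ φ(X_i)(f_{j,j}) φ(X_i)(f_{k,k}) c⁻¹`
for `j ≠ k`, and `1 ↦ 1`; here `Y_k = α f_{k,k} + β` and
`Y_k⁻¹ = β⁻¹ (1 - α γ⁻¹ f_{k,k})` with `γ = β + cα`. -/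
noncomputable def phiOp {R T : Type*} [CommRing R] [Ring T] [Algebra R T]
    {n : ℕ} (f : Fin n → Fin n → T) (b : Module.Basis (Option (Fin n × Fin n)) R T)
    (c α β γ : Rˣ) (i : ℕ) (hi : i + 1 < n) : T →ₗ[R] T :=
  letI ii : Fin n := ⟨i, Nat.lt_of_succ_lt hi⟩
  letI jj : Fin n := ⟨i + 1, hi⟩
  letI Y : Fin n → T := fun k => (α : R) • f k k + (β : R) • 1
  letI Yinv : Fin n → T := fun k =>
    ((β⁻¹ : Rˣ) : R) • (1 - ((α : R) * ((γ⁻¹ : Rˣ) : R)) • f k k)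
  letI d : Fin n → T := fun k =>
    if k = ii then ((α⁻¹ : Rˣ) : R) • (Y ii * Y jj * Yinv ii - (β : R) • 1)
    else if k = jj then f ii ii
    else f k k
  b.constr ℕ fun x => match x with
    | none => 1
    | some (j, k) => if j = k then d j else ((c⁻¹ : Rˣ) : R) • (d j * d k)

/-- The candidate inverse operator `φ(X_i⁻¹)`, defined by `f_{j,j} ↦ f_{j,j}` for
`j ≠ i, i+1`, `f_{i,i} ↦ f_{i+1,i+1}`, `f_{i+1,i+1} ↦ α⁻¹ (Y_{i+1}⁻¹ Y_i Y_{i+1} - β)`,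
`f_{j,k} ↦ φ(X_i⁻¹)(f_{j,j}) φ(X_i⁻¹)(f_{k,k}) c⁻¹` for `j ≠ k`, and `1 ↦ 1`. -/
noncomputable def phiOpInv {R T : Type*} [CommRing R] [Ring T] [Algebra R T]
    {n : ℕ} (f : Fin n → Fin n → T) (b : Module.Basis (Option (Fin n × Fin n)) R T)
    (c α β γ : Rˣ) (i : ℕ) (hi : i + 1 < n) : T →ₗ[R] T :=
  letI ii : Fin n := ⟨i, Nat.lt_of_succ_lt hi⟩
  letI jj : Fin n := ⟨i + 1, hi⟩
  letI Y : Fin n → T := fun k => (α : R) • f k k + (β : R) • 1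
  letI Yinv : Fin n → T := fun k =>
    ((β⁻¹ : Rˣ) : R) • (1 - ((α : R) * ((γ⁻¹ : Rˣ) : R)) • f k k)
  letI d : Fin n → T := fun k =>
    if k = ii then f jj jj
    else if k = jj then ((α⁻¹ : Rˣ) : R) • (Yinv jj * Y ii * Y jj - (β : R) • 1)
    else f k k
  b.constr ℕ fun x => match x with
    | none => 1
    | some (j, k) => if j = k then d j else ((c⁻¹ : Rˣ) : R) • (d j * d k)

/-!
Since `T_n` has the basis `1, f_{j,k}`, any family `g_{j,k}` in an `R`-algebra with
`g_{i,j} g_{k,l} = c g_{i,l}` defines an algebra map out of `T_n`. The character `χ` with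
`χ(f_{j,k}) = c` satisfies `f_{p,q} y f_{r,s} = χ(y) f_{p,q} f_{r,s}`; hence any family `d_k` of
conjugates `u f_{p,p} u⁻¹` obeys `d_j d_l d_m = c d_j d_m`, and `f_{j,k} ↦ c⁻¹ d_j d_k` is an
algebra endomorphism. As `c` is invertible, an algebra map out of `T_n` is determined by the images
of the `f_{k,k}`.

Because `γ = β + cα`, the element `Y_k` is a unit with inverse `β⁻¹ (1 - α γ⁻¹ f_{k,k})`, and
`α⁻¹ (Y_i Y_{i+1} Y_i⁻¹ - β) = Y_i f_{i+1,i+1} Y_i⁻¹`. So `φ(X_i)` and `φ(X_i⁻¹)` are such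
endomorphisms, and their composites fix every `f_{k,k}`: for instance `φ(X_i)` sends `Y_{i+1}` to
`Y_i`, hence `Y_{i+1}⁻¹ f_{i,i} Y_{i+1}` to `Y_i⁻¹ (Y_i f_{i+1,i+1} Y_i⁻¹) Y_i = f_{i+1,i+1}`.
-/

namespace Tn

open Module

variable {R T : Type*} [CommRing R] [Ring T] [Algebra R T] {n : ℕ}

structure IsBasis (b : Basis (Option (Fin n × Fin n)) R T) (f : Fin n → Fin n → T) (c : R) :
    Prop where
  basis_none : b none = 1
  basis_some : ∀ j k, b (some (j, k)) = f j k
  mul : ∀ i j k l, f i j * f k l = c • f i l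

def IsConjDiag (f : Fin n → Fin n → T) (x : T) : Prop :=
  ∃ (u : Tˣ) (p : Fin n), x = u * f p p * ↑u⁻¹

theorem isConjDiag_diag (f : Fin n → Fin n → T) (p : Fin n) : IsConjDiag f (f p p) :=
  ⟨1, p, by simp⟩

namespace IsBasis

section Basic

variable {b : Basis (Option (Fin n × Fin n)) R T} {f : Fin n → Fin n → T} {c : R}
  (hT : IsBasis b f c)
include hT

section Lift

variable {A : Type*} [Ring A] [Algebra R A]

theorem constr_one (F : Option (Fin n × Fin n) → A) : b.constr ℕ F 1 = F none := by
  rw [← hT.basis_none, Basis.constr_basis]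

theorem constr_f (F : Option (Fin n × Fin n) → A) (j k : Fin n) :
    b.constr ℕ F (f j k) = F (some (j, k)) := by
  rw [← hT.basis_some, Basis.constr_basis]

noncomputable def lift (g : Fin n → Fin n → A) (hg : ∀ i j k l, g i j * g k l = c • g i l) :
    T →ₐ[R] A :=
  AlgHom.ofLinearMap (b.constr ℕ fun x => x.elim 1 fun p => g p.1 p.2) (hT.constr_one _) (by
    refine (LinearMap.map_mul_iff _).2 (b.ext fun x => b.ext fun y => ?_)
    rcases x with _ | ⟨i, j⟩ <;> rcases y with _ | ⟨k, l⟩ <;>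
      simp [hT.basis_none, hT.basis_some, hT.mul, hg, hT.constr_one, hT.constr_f])

@[simp]
theorem lift_f (g : Fin n → Fin n → A) (hg : ∀ i j k l, g i j * g k l = c • g i l) (j k : Fin n) :
    hT.lift g hg (f j k) = g j k :=
  hT.constr_f _ j k

theorem algHom_ext (hc : IsUnit c) {φ ψ : T →ₐ[R] A} (h : ∀ k, φ (f k k) = ψ (f k k)) :
    φ = ψ := by
  have hf : ∀ j k, f j k = ((hc.unit⁻¹ : Rˣ) : R) • (f j j * f k k) := fun j k => by
    rw [hT.mul, smul_smul, IsUnit.val_inv_mul, one_smul]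
  refine AlgHom.toLinearMap_injective (b.ext fun x => ?_)
  rcases x with _ | ⟨j, k⟩
  · simp [hT.basis_none]
  · simp [hT.basis_some, hf j k, h]

end Lift

noncomputable def character : T →ₐ[R] R :=
  hT.lift (fun _ _ => c) fun _ _ _ _ => by simp

@[simp]
theorem character_f (j k : Fin n) : hT.character (f j k) = c :=
  hT.lift_f _ _ j k

theorem f_mul_mul_f (p q r s : Fin n) (y : T) :
    f p q * y * f r s = hT.character y • (f p q * f r s) := by
  have : LinearMap.mulRight R (f r s) ∘ₗ LinearMap.mulLeft R (f p q) =
      hT.character.toLinearMap.smulRight (f p q * f r s) := by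
    refine b.ext fun x => ?_
    rcases x with _ | ⟨k, l⟩
    · simp [hT.basis_none]
    · simp [hT.basis_some, hT.mul, smul_smul]
  simpa using LinearMap.congr_fun this y

theorem character_eq_of_isConjDiag {x : T} (hx : IsConjDiag f x) : hT.character x = c := by
  obtain ⟨u, p, rfl⟩ := hx
  rw [map_mul, map_mul, character_f, mul_right_comm, ← map_mul, Units.mul_inv, map_one, one_mul]

theorem mul_self_of_isConjDiag {x : T} (hx : IsConjDiag f x) : x * x = c • x := by
  obtain ⟨u, p, rfl⟩ := hx
  calc _ = (u : T) * (f p p * f p p) * ↑u⁻¹ := by simp only [mul_assoc, Units.inv_mul_cancel_left]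
    _ = _ := by rw [hT.mul, mul_smul_comm, smul_mul_assoc]

theorem mul_mul_of_isConjDiag {x z : T} (hx : IsConjDiag f x) (hz : IsConjDiag f z) (y : T) :
    x * y * z = hT.character y • (x * z) := by
  obtain ⟨u, p, rfl⟩ := hx
  obtain ⟨v, q, rfl⟩ := hz
  have key : ∀ y, (u : T) * f p p * ↑u⁻¹ * y * (v * f q q * ↑v⁻¹) =
      hT.character (↑u⁻¹ * y * v) • ((u : T) * (f p p * f q q) * ↑v⁻¹) := fun y => by
    calc _ = (u : T) * (f p p * (↑u⁻¹ * y * v) * f q q) * ↑v⁻¹ := by simp only [mul_assoc]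
      _ = _ := by rw [hT.f_mul_mul_f, mul_smul_comm, smul_mul_assoc]
  conv_rhs => rw [← mul_one ((u : T) * f p p * ↑u⁻¹), key]
  rw [key, smul_smul]
  congr 1
  simp only [map_mul, mul_one]
  ring

end Basic

section Units

variable {b : Basis (Option (Fin n × Fin n)) R T} {f : Fin n → Fin n → T} {c : Rˣ}
  (hT : IsBasis b f c)
include hT

theorem mul_mul_of_forall_isConjDiag {d : Fin n → T} (hd : ∀ k, IsConjDiag f (d k))
    (j l m : Fin n) : d j * d l * d m = (c : R) • (d j * d m) := by
  rw [hT.mul_mul_of_isConjDiag (hd j) (hd m), hT.character_eq_of_isConjDiag (hd l)]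

noncomputable def liftDiag (d : Fin n → T) (hd : ∀ k, IsConjDiag f (d k)) : T →ₐ[R] T :=
  hT.lift (fun j k => ((c⁻¹ : Rˣ) : R) • (d j * d k)) fun i j k l => by
    rw [smul_mul_smul, ← mul_assoc, hT.mul_mul_of_forall_isConjDiag hd, smul_mul_assoc,
      hT.mul_mul_of_forall_isConjDiag hd, smul_smul, smul_smul, smul_smul]
    congr 1
    simp

theorem liftDiag_diag (d : Fin n → T) (hd : ∀ k, IsConjDiag f (d k)) (k : Fin n) :
    hT.liftDiag d hd (f k k) = d k := by
  rw [liftDiag, lift_f, hT.mul_self_of_isConjDiag (hd k), smul_smul, Units.inv_mul, one_smul]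

theorem constr_eq_liftDiag (d : Fin n → T) (hd : ∀ k, IsConjDiag f (d k)) :
    b.constr ℕ (fun x => match x with
      | none => 1
      | some (j, k) => if j = k then d j else ((c⁻¹ : Rˣ) : R) • (d j * d k)) =
      (hT.liftDiag d hd).toLinearMap := by
  refine b.ext fun x => ?_
  rcases x with _ | ⟨j, k⟩
  · rw [Basis.constr_basis, hT.basis_none]
    exact (map_one (hT.liftDiag d hd)).symm
  · rw [Basis.constr_basis, hT.basis_some]
    dsimp only
    split_ifs with hjk
    · subst hjk; exact (hT.liftDiag_diag d hd j).symm
    · rw [AlgHom.toLinearMap_apply, liftDiag, lift_f]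

theorem liftDiag_comp_liftDiag {d d' : Fin n → T} (hd : ∀ k, IsConjDiag f (d k))
    (hd' : ∀ k, IsConjDiag f (d' k)) (h : ∀ k, hT.liftDiag d hd (d' k) = f k k) :
    (hT.liftDiag d hd).comp (hT.liftDiag d' hd') = AlgHom.id R T :=
  hT.algHom_ext c.isUnit fun k => by rw [AlgHom.comp_apply, liftDiag_diag, h, AlgHom.id_apply]

end Units

end IsBasis

section Braid

variable (f : Fin n → Fin n → T) (α β γ : Rˣ)

def Y (k : Fin n) : T :=
  (α : R) • f k k + (β : R) • 1

def Yinv (k : Fin n) : T :=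
  ((β⁻¹ : Rˣ) : R) • (1 - ((α : R) * ((γ⁻¹ : Rˣ) : R)) • f k k)

theorem conj_Y (u : Tˣ) (k : Fin n) :
    ((α⁻¹ : Rˣ) : R) • (u * Y f α β k * ↑u⁻¹ - (β : R) • 1) = u * f k k * ↑u⁻¹ := by
  simp only [Y, mul_add, add_mul, mul_smul_comm, smul_mul_assoc, mul_one, Units.mul_inv,
    add_sub_cancel_right, smul_smul, Units.inv_mul, one_smul]

theorem commute_Y_Yinv (k : Fin n) : Commute (Y f α β k) (Yinv f α β γ k) := by
  refine ((Commute.one_right _).sub_right (Commute.smul_right ?_ _)).smul_right _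
  exact ((Commute.refl _).smul_left _).add_left ((Commute.one_left _).smul_left _)

theorem map_Y {p q : Fin n} (φ : T →ₐ[R] T) (h : φ (f p p) = f q q) :
    φ (Y f α β p) = Y f α β q := by
  simp [Y, h]

theorem map_Yinv {p q : Fin n} (φ : T →ₐ[R] T) (h : φ (f p p) = f q q) :
    φ (Yinv f α β γ p) = Yinv f α β γ q := by
  simp [Yinv, h]

noncomputable def phiDiag (ii jj : Fin n) (k : Fin n) : T :=
  if k = ii then ((α⁻¹ : Rˣ) : R) • (Y f α β ii * Y f α β jj * Yinv f α β γ ii - (β : R) • 1)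
  else if k = jj then f ii ii
  else f k k

noncomputable def phiInvDiag (ii jj : Fin n) (k : Fin n) : T :=
  if k = ii then f jj jj
  else if k = jj then ((α⁻¹ : Rˣ) : R) • (Yinv f α β γ jj * Y f α β ii * Y f α β jj - (β : R) • 1)
  else f k k

variable {b : Basis (Option (Fin n × Fin n)) R T} {f} {c : Rˣ} (hT : IsBasis b f c)
  {α β γ} (hγ : (γ : R) = β + c * α) {ii jj : Fin n}
include hT hγ

theorem IsBasis.Y_mul_Yinv (k : Fin n) : Y f α β k * Yinv f α β γ k = 1 := by
  simp only [Y, Yinv, mul_smul_comm, mul_sub, add_mul, smul_mul_assoc, one_mul, mul_one, hT.mul,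
    smul_smul, smul_sub]
  match_scalars
  · linear_combination (-(α : R) * ↑β⁻¹) * γ.inv_mul + ((α : R) * ↑β⁻¹ * ↑γ⁻¹) * hγ
  · simp

def IsBasis.yUnit (k : Fin n) : Tˣ where
  val := Y f α β k
  inv := Yinv f α β γ k
  val_inv := hT.Y_mul_Yinv hγ k
  inv_val := (commute_Y_Yinv f α β γ k).eq ▸ hT.Y_mul_Yinv hγ k

theorem IsBasis.phiDiag_left : phiDiag f α β γ ii jj ii =
    ↑(hT.yUnit hγ ii) * f jj jj * ↑(hT.yUnit hγ ii)⁻¹ := by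
  rw [phiDiag, if_pos rfl]
  exact conj_Y f α β (hT.yUnit hγ ii) jj

theorem IsBasis.phiInvDiag_right (hij : ii ≠ jj) : phiInvDiag f α β γ ii jj jj =
    ↑(hT.yUnit hγ jj)⁻¹ * f ii ii * ↑(hT.yUnit hγ jj) := by
  rw [phiInvDiag, if_neg hij.symm, if_pos rfl]
  exact conj_Y f α β (hT.yUnit hγ jj)⁻¹ ii

theorem IsBasis.isConjDiag_phiDiag (k : Fin n) : IsConjDiag f (phiDiag f α β γ ii jj k) := by
  unfold phiDiag
  split_ifs
  · exact ⟨hT.yUnit hγ ii, jj, conj_Y f α β (hT.yUnit hγ ii) jj⟩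
  · exact isConjDiag_diag f ii
  · exact isConjDiag_diag f k

theorem IsBasis.isConjDiag_phiInvDiag (k : Fin n) : IsConjDiag f (phiInvDiag f α β γ ii jj k) := by
  unfold phiInvDiag
  split_ifs
  · exact isConjDiag_diag f jj
  · exact ⟨(hT.yUnit hγ jj)⁻¹, ii, conj_Y f α β (hT.yUnit hγ jj)⁻¹ ii⟩
  · exact isConjDiag_diag f k

theorem IsBasis.liftDiag_phiDiag_phiInvDiag (hij : ii ≠ jj) (k : Fin n) :
    hT.liftDiag (phiDiag f α β γ ii jj) (hT.isConjDiag_phiDiag hγ) (phiInvDiag f α β γ ii jj k) =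
      f k k := by
  set φ := hT.liftDiag (phiDiag f α β γ ii jj) (hT.isConjDiag_phiDiag hγ)
  have hii : φ (f ii ii) = ↑(hT.yUnit hγ ii) * f jj jj * ↑(hT.yUnit hγ ii)⁻¹ := by
    rw [liftDiag_diag, hT.phiDiag_left hγ]
  have hjj : φ (f jj jj) = f ii ii := by
    rw [liftDiag_diag, phiDiag, if_neg hij.symm, if_pos rfl]
  have hY : φ ↑(hT.yUnit hγ jj) = ↑(hT.yUnit hγ ii) := map_Y f α β φ hjj
  have hYinv : φ ↑(hT.yUnit hγ jj)⁻¹ = ↑(hT.yUnit hγ ii)⁻¹ := map_Yinv f α β γ φ hjj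
  rcases eq_or_ne k ii with rfl | hki
  · rw [phiInvDiag, if_pos rfl, hjj]
  rcases eq_or_ne k jj with rfl | hkj
  · rw [hT.phiInvDiag_right hγ hij, map_mul, map_mul, hY, hYinv, hii]
    simp [mul_assoc]
  · rw [phiInvDiag, if_neg hki, if_neg hkj, liftDiag_diag, phiDiag, if_neg hki, if_neg hkj]

theorem IsBasis.liftDiag_phiInvDiag_phiDiag (hij : ii ≠ jj) (k : Fin n) :
    hT.liftDiag (phiInvDiag f α β γ ii jj) (hT.isConjDiag_phiInvDiag hγ)
      (phiDiag f α β γ ii jj k) = f k k := by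
  set ψ := hT.liftDiag (phiInvDiag f α β γ ii jj) (hT.isConjDiag_phiInvDiag hγ)
  have hii : ψ (f ii ii) = f jj jj := by
    rw [liftDiag_diag, phiInvDiag, if_pos rfl]
  have hjj : ψ (f jj jj) = ↑(hT.yUnit hγ jj)⁻¹ * f ii ii * ↑(hT.yUnit hγ jj) := by
    rw [liftDiag_diag, hT.phiInvDiag_right hγ hij]
  have hY : ψ ↑(hT.yUnit hγ ii) = ↑(hT.yUnit hγ jj) := map_Y f α β ψ hii
  have hYinv : ψ ↑(hT.yUnit hγ ii)⁻¹ = ↑(hT.yUnit hγ jj)⁻¹ := map_Yinv f α β γ ψ hii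
  rcases eq_or_ne k ii with rfl | hki
  · rw [hT.phiDiag_left hγ, map_mul, map_mul, hY, hYinv, hjj]
    simp [mul_assoc]
  rcases eq_or_ne k jj with rfl | hkj
  · rw [phiDiag, if_neg hij.symm, if_pos rfl, hii]
  · rw [phiDiag, if_neg hki, if_neg hkj, liftDiag_diag, phiInvDiag, if_neg hki, if_neg hkj]

theorem IsBasis.phiOp_eq_liftDiag (i : ℕ) (hi : i + 1 < n) :
    phiOp f b c α β γ i hi = (hT.liftDiag (phiDiag f α β γ ⟨i, Nat.lt_of_succ_lt hi⟩ ⟨i + 1, hi⟩)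
      (hT.isConjDiag_phiDiag hγ)).toLinearMap :=
  hT.constr_eq_liftDiag _ _

theorem IsBasis.phiOpInv_eq_liftDiag (i : ℕ) (hi : i + 1 < n) :
    phiOpInv f b c α β γ i hi =
      (hT.liftDiag (phiInvDiag f α β γ ⟨i, Nat.lt_of_succ_lt hi⟩ ⟨i + 1, hi⟩)
        (hT.isConjDiag_phiInvDiag hγ)).toLinearMap :=
  hT.constr_eq_liftDiag _ _

end Braid

end Tn

open Tn

/-- The operators `φ(X_i)` on `T_n` are invertible, with inverses the operators
`φ(X_i⁻¹)` given by the indicated formulas. -/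
theorem phiOp_invertible
    (R T : Type*) [CommRing R] [Ring T] [Algebra R T]
    (n : ℕ) (f : Fin n → Fin n → T) (b : Module.Basis (Option (Fin n × Fin n)) R T)
    (hb1 : b none = 1) (hbf : ∀ j k, b (some (j, k)) = f j k)
    (c α β γ : Rˣ) (hγ : (γ : R) = (β : R) + (c : R) * (α : R))
    (hrel : ∀ i j k l, f i j * f k l = (c : R) • f i l)
    (i : ℕ) (hi : i + 1 < n) :
    (phiOp f b c α β γ i hi) ∘ₗ (phiOpInv f b c α β γ i hi) = LinearMap.id ∧
    (phiOpInv f b c α β γ i hi) ∘ₗ (phiOp f b c α β γ i hi) = LinearMap.id := by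
  have hT : IsBasis b f c := ⟨hb1, hbf, hrel⟩
  have hij : (⟨i, Nat.lt_of_succ_lt hi⟩ : Fin n) ≠ ⟨i + 1, hi⟩ := by simp [Fin.ext_iff]
  rw [hT.phiOp_eq_liftDiag hγ, hT.phiOpInv_eq_liftDiag hγ, ← AlgHom.comp_toLinearMap,
    ← AlgHom.comp_toLinearMap,
    hT.liftDiag_comp_liftDiag _ _ (hT.liftDiag_phiDiag_phiInvDiag hγ hij),
    hT.liftDiag_comp_liftDiag _ _ (hT.liftDiag_phiInvDiag_phiDiag hγ hij)]
  exact ⟨rfl, rfl⟩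
end

section
/- Under the parameter specializations β_i = β for all i, α_i = c_{i-1,i-1} α_{i-1}/c_{i,i} for i > 1, and c_{i,j} = c for all i,j, the operators φ(X_i) on T_n satisfy the braid relations: φ(X_i)φ(X_{i+1})φ(X_i) = φ(X_{i+1})φ(X_i)φ(X_{i+1}) for 1 ≤ i ≤ n-2, and φ(X_i)φ(X_j) = φ(X_j)φ(X_i) for |i-j| > 1; hence φ extends to a representation of the braid group B_n on T_n. -/
namespace PhiOp

variable {R T : Type*} [CommRing R] [Ring T] [Algebra R T] {n : ℕ}
  {f : Fin n → Fin n → T} {b : Module.Basis (Option (Fin n × Fin n)) R T} {c α β γ : Rˣ}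

section Lift

variable {S : Type*} [Semiring S] [Algebra R S]

noncomputable def liftAlgHom (hb1 : b none = 1) (hbf : ∀ j k, b (some (j, k)) = f j k)
    (hrel : ∀ i j k l, f i j * f k l = (c : R) • f i l)
    (g : Fin n → Fin n → S) (hg : ∀ i j k l, g i j * g k l = (c : R) • g i l) : T →ₐ[R] S :=
  let F := b.constr ℕ fun o => o.elim 1 (Function.uncurry g)
  have hF1 : F 1 = 1 := by rw [← hb1, Module.Basis.constr_basis]; rfl
  have hFf : ∀ j k, F (f j k) = g j k := fun j k => by
    rw [← hbf, Module.Basis.constr_basis]; rfl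
  AlgHom.ofLinearMap F hF1 <| by
    have h : (LinearMap.mul R T).compr₂ F = (LinearMap.mul R S).compl₁₂ F F := by
      refine b.ext fun u => b.ext fun v => ?_
      rcases u with _ | ⟨i, j⟩ <;> rcases v with _ | ⟨k, l⟩ <;>
        simp [hb1, hbf, hrel, hg, hF1, hFf]
    exact fun x y => LinearMap.congr_fun₂ h x y

theorem liftAlgHom_apply (hb1 : b none = 1) (hbf : ∀ j k, b (some (j, k)) = f j k)
    (hrel : ∀ i j k l, f i j * f k l = (c : R) • f i l)
    (g : Fin n → Fin n → S) (hg : ∀ i j k l, g i j * g k l = (c : R) • g i l) (j k : Fin n) :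
    liftAlgHom hb1 hbf hrel g hg (f j k) = g j k := by
  change b.constr ℕ _ _ = _
  rw [← hbf, Module.Basis.constr_basis]
  rfl

end Lift

section Characters

variable (hb1 : b none = 1) (hbf : ∀ j k, b (some (j, k)) = f j k)
  (hrel : ∀ i j k l, f i j * f k l = (c : R) • f i l)

noncomputable def augmentation : T →ₐ[R] R :=
  liftAlgHom hb1 hbf hrel (fun _ _ => 0) (by simp)

noncomputable def weight : T →ₐ[R] R :=
  liftAlgHom hb1 hbf hrel (fun _ _ => (c : R)) (by simp)

variable (R) in
def fSpan (f : Fin n → Fin n → T) : Submodule R T :=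
  Submodule.span R (Set.range (Function.uncurry f))

theorem sub_augmentation_smul_one_mem_fSpan (x : T) :
    x - augmentation hb1 hbf hrel x • 1 ∈ fSpan R f := by
  induction b.mem_span x using Submodule.span_induction with
  | mem _ h =>
    obtain ⟨_ | ⟨j, k⟩, rfl⟩ := h
    · simp [hb1]
    · rw [hbf, augmentation, liftAlgHom_apply, zero_smul, sub_zero]
      exact Submodule.subset_span ⟨(j, k), rfl⟩
  | zero => simp
  | add x y _ _ hx hy => convert add_mem hx hy using 1; simp only [map_add, add_smul]; abel
  | smul r x _ hx => convert Submodule.smul_mem _ r hx using 1; simp [smul_sub, smul_smul]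

theorem mul_mul_eq_weight_smul {x y : T} (hx : x ∈ fSpan R f) (hy : y ∈ fSpan R f) (z : T) :
    x * z * y = weight hb1 hbf hrel z • (x * y) := by
  induction hx, hy using Submodule.span_induction₂ with
  | mem_mem x y hx hy =>
    obtain ⟨⟨p, q⟩, rfl⟩ := hx
    obtain ⟨⟨r, s⟩, rfl⟩ := hy
    induction b.mem_span z using Submodule.span_induction with
    | mem _ h =>
      obtain ⟨_ | ⟨j, k⟩, rfl⟩ := h
      · simp [hb1]
      · simp [hbf, hrel, weight, liftAlgHom_apply, smul_smul]
    | zero => simp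
    | add z w _ _ hz hw => simp only [mul_add, add_mul, hz, hw, map_add, add_smul]
    | smul r z _ hz =>
      simp only [mul_smul_comm, smul_mul_assoc, hz, map_smul, smul_smul, smul_eq_mul]
  | zero_left => simp
  | zero_right => simp
  | add_left x y w _ _ _ hx hy => simp only [add_mul, hx, hy, smul_add]
  | add_right x y w _ _ _ hy hw => simp only [mul_add, hy, hw, smul_add]
  | smul_left r x y _ _ h => simp only [smul_mul_assoc, h, smul_comm r]
  | smul_right r x y _ _ h => simp only [mul_smul_comm, h, smul_comm r]

end Characters

section Generators

theorem smul_add_smul_one_sub_mul_sub (hγ : (γ : R) = (β : R) + (c : R) * (α : R)) (x : T) :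
    ((α : R) • x + (β : R) • 1 - (β : R) • 1) * ((α : R) • x + (β : R) • 1 - (γ : R) • 1) =
      ((α : R) * (α : R)) • (x * x - (c : R) • x) := by
  simp only [hγ, mul_add, add_mul, mul_sub, sub_mul, smul_mul_assoc, mul_smul_comm, one_mul,
    mul_one, smul_sub, smul_add, smul_smul]
  match_scalars <;> ring

theorem conj_sub_mul_conj_sub (a : Tˣ) (x : T) (r s : R) :
    ((a * x * a⁻¹ : T) - r • 1) * ((a * x * a⁻¹ : T) - s • 1) =
      a * ((x - r • 1) * (x - s • 1)) * a⁻¹ := by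
  have h := ConjAct.units_smul_def (ConjAct.toConjAct a) ((x - r • 1) * (x - s • 1))
  simpa [smul_mul', smul_sub, smul_comm _ r, smul_comm _ s, ConjAct.units_smul_def] using h

variable (hγ : (γ : R) = (β : R) + (c : R) * (α : R))
  (hrel : ∀ i j k l, f i j * f k l = (c : R) • f i l)

noncomputable def Y (k : Fin n) : Tˣ where
  val := (α : R) • f k k + (β : R) • 1
  inv := ((β⁻¹ : Rˣ) : R) • (1 - ((α : R) * ((γ⁻¹ : Rˣ) : R)) • f k k)
  val_inv := by
    simp only [mul_smul_comm, mul_sub, add_mul, smul_mul_assoc, hrel, one_mul, mul_one, smul_smul,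
      smul_sub]
    match_scalars
    · linear_combination ((β⁻¹ : Rˣ) * (α : R) * (γ⁻¹ : Rˣ)) * hγ -
        ((β⁻¹ : Rˣ) * (α : R)) * γ.mul_inv
    · linear_combination β.inv_mul
  inv_val := by
    simp only [mul_smul_comm, mul_add, sub_mul, smul_mul_assoc, hrel, one_mul, mul_one, smul_smul,
      smul_sub]
    match_scalars
    · linear_combination ((β⁻¹ : Rˣ) * (α : R) * (γ⁻¹ : Rˣ)) * hγ -
        ((β⁻¹ : Rˣ) * (α : R)) * γ.mul_inv
    · linear_combination β.mul_inv

theorem Y_sub_mul_Y_sub_eq_zero (k : Fin n) :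
    ((Y hγ hrel k : T) - (β : R) • 1) * ((Y hγ hrel k : T) - (γ : R) • 1) = 0 := by
  rw [Y, Units.val_mk, smul_add_smul_one_sub_mul_sub hγ, hrel, sub_self, smul_zero]

theorem algHom_ext_of_Y {S : Type*} [Ring S] [Algebra R S]
    (hb1 : b none = 1) (hbf : ∀ j k, b (some (j, k)) = f j k) {F G : T →ₐ[R] S}
    (h : ∀ k, Units.map (F : T →* S) (Y hγ hrel k) = Units.map (G : T →* S) (Y hγ hrel k)) :
    F = G := by
  have hdiag : ∀ k, F (f k k) = G (f k k) := fun k => by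
    have hk := congrArg Units.val (h k)
    simp only [Units.coe_map, MonoidHom.coe_coe, Y, map_add, map_smul, map_one,
      add_left_inj] at hk
    exact α.isUnit.smul_left_cancel.mp hk
  refine AlgHom.toLinearMap_injective (b.ext fun u => ?_)
  rcases u with _ | ⟨j, k⟩
  · simp [hb1]
  · have hf : f j k = ((c⁻¹ : Rˣ) : R) • (f j j * f k k) := by
      rw [hrel, smul_smul, Units.inv_mul, one_smul]
    simp [hbf, hf, hdiag]

end Generators

section Operator

variable (hγ : (γ : R) = (β : R) + (c : R) * (α : R))
  (hrel : ∀ i j k l, f i j * f k l = (c : R) • f i l) (i : ℕ) (hi : i + 1 < n)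

noncomputable def phiDiag (k : Fin n) : T :=
  if k = ⟨i, Nat.lt_of_succ_lt hi⟩ then
    ((α⁻¹ : Rˣ) : R) • (((Y hγ hrel ⟨i, Nat.lt_of_succ_lt hi⟩ * Y hγ hrel ⟨i + 1, hi⟩ *
      (Y hγ hrel ⟨i, Nat.lt_of_succ_lt hi⟩)⁻¹ : Tˣ) : T) - (β : R) • 1)
  else if k = ⟨i + 1, hi⟩ then f ⟨i, Nat.lt_of_succ_lt hi⟩ ⟨i, Nat.lt_of_succ_lt hi⟩
  else f k k

theorem smul_phiDiag_add_smul_one :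
    (α : R) • phiDiag hγ hrel i hi ⟨i, Nat.lt_of_succ_lt hi⟩ + (β : R) • 1 =
      (Y hγ hrel ⟨i, Nat.lt_of_succ_lt hi⟩ * Y hγ hrel ⟨i + 1, hi⟩ *
        (Y hγ hrel ⟨i, Nat.lt_of_succ_lt hi⟩)⁻¹ : Tˣ) := by
  rw [phiDiag, if_pos rfl, smul_smul, Units.mul_inv, one_smul, sub_add_cancel]

theorem phiDiag_mul_self (k : Fin n) :
    phiDiag hγ hrel i hi k * phiDiag hγ hrel i hi k = (c : R) • phiDiag hγ hrel i hi k := by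
  by_cases hk : k = ⟨i, Nat.lt_of_succ_lt hi⟩
  · subst hk
    have h := smul_add_smul_one_sub_mul_sub hγ (phiDiag hγ hrel i hi ⟨i, Nat.lt_of_succ_lt hi⟩)
    rw [smul_phiDiag_add_smul_one, Units.val_mul, Units.val_mul, conj_sub_mul_conj_sub,
      Y_sub_mul_Y_sub_eq_zero, mul_zero, zero_mul, eq_comm, ← Units.val_mul,
      (α * α).isUnit.smul_eq_zero, sub_eq_zero] at h
    exact h
  · rw [phiDiag, if_neg hk]
    split_ifs <;> exact hrel _ _ _ _

theorem map_phiDiag (κ : T →ₐ[R] R) (r : R) (hκ : ∀ j, κ (f j j) = r) (k : Fin n) :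
    κ (phiDiag hγ hrel i hi k) = r := by
  rw [phiDiag]
  split_ifs
  · have hY : κ (Y hγ hrel ⟨i + 1, hi⟩) = (α : R) * r + β := by simp [Y, hκ]
    have hinv := congrArg κ (Y hγ hrel ⟨i, Nat.lt_of_succ_lt hi⟩).mul_inv
    rw [map_mul, map_one] at hinv
    simp only [map_smul, map_sub, Units.val_mul, map_mul, map_one, smul_eq_mul]
    linear_combination ((α⁻¹ : Rˣ) * κ (Y hγ hrel ⟨i + 1, hi⟩)) * hinv +
      ((α⁻¹ : Rˣ) : R) * hY + r * α.inv_mul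
  all_goals exact hκ _

theorem phiDiag_mem_fSpan (hb1 : b none = 1) (hbf : ∀ j k, b (some (j, k)) = f j k)
    (k : Fin n) : phiDiag hγ hrel i hi k ∈ fSpan R f := by
  have h := sub_augmentation_smul_one_mem_fSpan hb1 hbf hrel (phiDiag hγ hrel i hi k)
  rwa [map_phiDiag hγ hrel i hi _ 0 (fun _ => liftAlgHom_apply ..), zero_smul, sub_zero] at h

theorem weight_phiDiag (hb1 : b none = 1) (hbf : ∀ j k, b (some (j, k)) = f j k)
    (k : Fin n) : weight hb1 hbf hrel (phiDiag hγ hrel i hi k) = c :=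
  map_phiDiag hγ hrel i hi _ c (fun _ => liftAlgHom_apply ..) k

theorem phiDiag_mul_phiDiag_mul (hb1 : b none = 1) (hbf : ∀ j k, b (some (j, k)) = f j k)
    (j k l m : Fin n) :
    phiDiag hγ hrel i hi j * phiDiag hγ hrel i hi k *
        (phiDiag hγ hrel i hi l * phiDiag hγ hrel i hi m) =
      ((c : R) * c) • (phiDiag hγ hrel i hi j * phiDiag hγ hrel i hi m) := by
  have hmem := phiDiag_mem_fSpan hγ hrel i hi hb1 hbf
  rw [← mul_assoc, mul_mul_eq_weight_smul hb1 hbf hrel (hmem j) (hmem l), smul_mul_assoc,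
    mul_mul_eq_weight_smul hb1 hbf hrel (hmem j) (hmem m), weight_phiDiag hγ hrel i hi hb1 hbf,
    weight_phiDiag hγ hrel i hi hb1 hbf, smul_smul]

noncomputable def phiAlgHom (hb1 : b none = 1) (hbf : ∀ j k, b (some (j, k)) = f j k) :
    T →ₐ[R] T :=
  liftAlgHom hb1 hbf hrel
    (fun j k => ((c⁻¹ : Rˣ) : R) • (phiDiag hγ hrel i hi j * phiDiag hγ hrel i hi k))
    fun j k l m => by
      rw [smul_mul_smul_comm, phiDiag_mul_phiDiag_mul hγ hrel i hi hb1 hbf, smul_smul, smul_smul,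
        mul_mul_mul_comm, Units.inv_mul, one_mul, Units.mul_inv]

theorem phiAlgHom_apply_diag (hb1 : b none = 1) (hbf : ∀ j k, b (some (j, k)) = f j k)
    (k : Fin n) : phiAlgHom hγ hrel i hi hb1 hbf (f k k) = phiDiag hγ hrel i hi k := by
  rw [phiAlgHom, liftAlgHom_apply, phiDiag_mul_self, smul_smul, Units.inv_mul, one_smul]

theorem phiAlgHom_toLinearMap (hb1 : b none = 1) (hbf : ∀ j k, b (some (j, k)) = f j k) :
    (phiAlgHom hγ hrel i hi hb1 hbf).toLinearMap = phiOp f b c α β γ i hi := by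
  refine b.ext fun u => ?_
  rcases u with _ | ⟨j, k⟩
  · rw [phiOp, Module.Basis.constr_basis, AlgHom.toLinearMap_apply, hb1, map_one]
  · rw [hbf, AlgHom.toLinearMap_apply, ← hbf, phiOp, Module.Basis.constr_basis, hbf]
    change _ = if j = k then phiDiag hγ hrel i hi j
      else ((c⁻¹ : Rˣ) : R) • (phiDiag hγ hrel i hi j * phiDiag hγ hrel i hi k)
    split_ifs with hjk
    · subst hjk
      exact phiAlgHom_apply_diag hγ hrel i hi hb1 hbf j
    · exact liftAlgHom_apply ..

theorem coe_map_phiAlgHom_Y (hb1 : b none = 1) (hbf : ∀ j k, b (some (j, k)) = f j k)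
    (k : Fin n) :
    (Units.map (phiAlgHom hγ hrel i hi hb1 hbf : T →* T) (Y hγ hrel k) : T) =
      (α : R) • phiDiag hγ hrel i hi k + (β : R) • 1 := by
  simp [Y, phiAlgHom_apply_diag]

theorem map_phiAlgHom_Y_self (hb1 : b none = 1) (hbf : ∀ j k, b (some (j, k)) = f j k) :
    Units.map (phiAlgHom hγ hrel i hi hb1 hbf : T →* T) (Y hγ hrel ⟨i, Nat.lt_of_succ_lt hi⟩) =
      Y hγ hrel ⟨i, Nat.lt_of_succ_lt hi⟩ * Y hγ hrel ⟨i + 1, hi⟩ *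
        (Y hγ hrel ⟨i, Nat.lt_of_succ_lt hi⟩)⁻¹ :=
  Units.ext <| by rw [coe_map_phiAlgHom_Y, smul_phiDiag_add_smul_one]

theorem map_phiAlgHom_Y_succ (hb1 : b none = 1) (hbf : ∀ j k, b (some (j, k)) = f j k) :
    Units.map (phiAlgHom hγ hrel i hi hb1 hbf : T →* T) (Y hγ hrel ⟨i + 1, hi⟩) =
      Y hγ hrel ⟨i, Nat.lt_of_succ_lt hi⟩ :=
  Units.ext <| by rw [coe_map_phiAlgHom_Y, phiDiag, if_neg (by simp), if_pos rfl]; rfl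

theorem map_phiAlgHom_Y_of_ne (hb1 : b none = 1) (hbf : ∀ j k, b (some (j, k)) = f j k)
    (k : ℕ) (hk : k < n) (hki : k ≠ i) (hki' : k ≠ i + 1) :
    Units.map (phiAlgHom hγ hrel i hi hb1 hbf : T →* T) (Y hγ hrel ⟨k, hk⟩) = Y hγ hrel ⟨k, hk⟩ :=
  Units.ext <| by rw [coe_map_phiAlgHom_Y, phiDiag, if_neg (by simpa), if_neg (by simpa)]; rfl

end Operator

theorem units_map_comp (F G : T →ₐ[R] T) (u : Tˣ) :
    Units.map ((F.comp G : T →ₐ[R] T) : T →* T) u =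
      Units.map (F : T →* T) (Units.map (G : T →* T) u) :=
  rfl

variable (hγ : (γ : R) = (β : R) + (c : R) * (α : R))
  (hrel : ∀ i j k l, f i j * f k l = (c : R) • f i l)
  (hb1 : b none = 1) (hbf : ∀ j k, b (some (j, k)) = f j k)

theorem phiAlgHom_braid (i : ℕ) (hi : i + 1 < n) (hi' : i + 1 + 1 < n) :
    (phiAlgHom hγ hrel i hi hb1 hbf).comp
        ((phiAlgHom hγ hrel (i + 1) hi' hb1 hbf).comp (phiAlgHom hγ hrel i hi hb1 hbf)) =
      (phiAlgHom hγ hrel (i + 1) hi' hb1 hbf).comp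
        ((phiAlgHom hγ hrel i hi hb1 hbf).comp (phiAlgHom hγ hrel (i + 1) hi' hb1 hbf)) := by
  refine algHom_ext_of_Y hγ hrel hb1 hbf fun ⟨k, hk⟩ => ?_
  simp only [units_map_comp]
  obtain rfl | rfl | rfl | ⟨h1, h2, h3⟩ :
      k = i ∨ k = i + 1 ∨ k = i + 1 + 1 ∨ (k ≠ i ∧ k ≠ i + 1 ∧ k ≠ i + 1 + 1) := by omega
  all_goals simp (disch := omega) only [map_phiAlgHom_Y_self, map_phiAlgHom_Y_succ,
    map_phiAlgHom_Y_of_ne, map_mul, map_inv]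
  group

theorem phiAlgHom_comm (i j : ℕ) (hi : i + 1 < n) (hj : j + 1 < n) (hij : i + 1 < j) :
    (phiAlgHom hγ hrel i hi hb1 hbf).comp (phiAlgHom hγ hrel j hj hb1 hbf) =
      (phiAlgHom hγ hrel j hj hb1 hbf).comp (phiAlgHom hγ hrel i hi hb1 hbf) := by
  refine algHom_ext_of_Y hγ hrel hb1 hbf fun ⟨k, hk⟩ => ?_
  simp only [units_map_comp]
  obtain rfl | rfl | rfl | rfl | ⟨h1, h2, h3, h4⟩ : k = i ∨ k = i + 1 ∨ k = j ∨ k = j + 1 ∨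
      (k ≠ i ∧ k ≠ i + 1 ∧ k ≠ j ∧ k ≠ j + 1) := by omega
  all_goals simp (disch := omega) only [map_phiAlgHom_Y_self, map_phiAlgHom_Y_succ,
    map_phiAlgHom_Y_of_ne, map_mul, map_inv]

end PhiOp

/-- Under the parameter specializations (all `β_i = β`, all `c_{i,j} = c`, and
`α_i c_{i,i}` constant, i.e. a single `α`), the operators `φ(X_i)` on `T_n` satisfy
the braid relations, hence `φ` extends to a representation of the braid group `B_n`
on `T_n`. -/
theorem phiOp_braid_relations
    (R T : Type*) [CommRing R] [Ring T] [Algebra R T]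
    (n : ℕ) (f : Fin n → Fin n → T) (b : Module.Basis (Option (Fin n × Fin n)) R T)
    (hb1 : b none = 1) (hbf : ∀ j k, b (some (j, k)) = f j k)
    (c α β γ : Rˣ) (hγ : (γ : R) = (β : R) + (c : R) * (α : R))
    (hrel : ∀ i j k l, f i j * f k l = (c : R) • f i l) :
    (∀ i : ℕ, ∀ hi : i + 2 < n,
      (phiOp f b c α β γ i (by omega)) ∘ₗ (phiOp f b c α β γ (i + 1) hi) ∘ₗ
          (phiOp f b c α β γ i (by omega)) =
        (phiOp f b c α β γ (i + 1) hi) ∘ₗ (phiOp f b c α β γ i (by omega)) ∘ₗ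
          (phiOp f b c α β γ (i + 1) hi)) ∧
    (∀ i j : ℕ, ∀ hi : i + 1 < n, ∀ hj : j + 1 < n, (i + 1 < j ∨ j + 1 < i) →
      (phiOp f b c α β γ i hi) ∘ₗ (phiOp f b c α β γ j hj) =
        (phiOp f b c α β γ j hj) ∘ₗ (phiOp f b c α β γ i hi)) := by
  simp only [← PhiOp.phiAlgHom_toLinearMap hγ hrel _ _ hb1 hbf, ← AlgHom.comp_toLinearMap]
  refine ⟨fun i hi => congrArg _ (PhiOp.phiAlgHom_braid hγ hrel hb1 hbf i _ hi), ?_⟩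
  rintro i j hi hj (hij | hji)
  · exact congrArg _ (PhiOp.phiAlgHom_comm hγ hrel hb1 hbf i j hi hj hij)
  · exact congrArg _ (PhiOp.phiAlgHom_comm hγ hrel hb1 hbf j i hj hi hji).symm
end

section
/- The braid group action φ on T_n preserves the R-submodule spanned by the n² elements f_{i,j}; i.e., for each generator X_i and each pair (j,k), the element φ(X_i)(f_{j,k}) lies in the span of {f_{p,q} : p,q ∈ {1,…,n}}. -/
namespace Submodule

variable {R T : Type*} [CommRing R] [Ring T] [Algebra R T]

theorem span_mul_span_le_of_mul_eq_smul {ι : Type*} (f : ι → ι → T) (c : R)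
    (hrel : ∀ i j k l, f i j * f k l = c • f i l) :
    span R (Set.range fun p : ι × ι => f p.1 p.2) * span R (Set.range fun p : ι × ι => f p.1 p.2)
      ≤ span R (Set.range fun p : ι × ι => f p.1 p.2) := by
  rw [span_mul_span, span_le]
  rintro _ ⟨_, ⟨p, rfl⟩, _, ⟨q, rfl⟩, rfl⟩
  dsimp only
  rw [hrel]
  exact smul_mem _ _ (subset_span ⟨(p.1, q.2), rfl⟩)

theorem mul_sub_smul_one_mem {S : Submodule R T} (hS : S * S ≤ S) {x y : T} {r s : R}
    (hx : x - r • 1 ∈ S) (hy : y - s • 1 ∈ S) : x * y - (r * s) • 1 ∈ S := by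
  have h : x * y - (r * s) • 1 = (x - r • 1) * (y - s • 1) + r • (y - s • 1) + s • (x - r • 1) := by
    simp only [sub_mul, mul_sub, smul_mul_assoc, mul_smul_comm, one_mul, mul_one, smul_sub,
      smul_smul, mul_comm s r]
    abel
  rw [h]
  exact add_mem (add_mem (hS (mul_mem_mul hx hy)) (smul_mem _ _ hy)) (smul_mem _ _ hx)

end Submodule

theorem phiOp_preserves_span_general
    (R T : Type*) [CommRing R] [Ring T] [Algebra R T]
    (n : ℕ) (f : Fin n → Fin n → T) (b : Module.Basis (Option (Fin n × Fin n)) R T)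
    (hbf : ∀ j k, b (some (j, k)) = f j k)
    (c α β γ : Rˣ)
    (hrel : ∀ i j k l, f i j * f k l = (c : R) • f i l)
    (i : ℕ) (hi : i + 1 < n) (j k : Fin n) :
    phiOp f b c α β γ i hi (f j k) ∈
      Submodule.span R (Set.range fun p : Fin n × Fin n => f p.1 p.2) := by
  set S := Submodule.span R (Set.range fun p : Fin n × Fin n => f p.1 p.2)
  have hS : S * S ≤ S := Submodule.span_mul_span_le_of_mul_eq_smul f _ hrel
  have hf : ∀ p q, f p q ∈ S := fun p q => Submodule.subset_span ⟨(p, q), rfl⟩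
  have hmul : ∀ {x y}, x ∈ S → y ∈ S → x * y ∈ S := fun hx hy =>
    hS (Submodule.mul_mem_mul hx hy)
  have hY : ∀ p, (α : R) • f p p + (β : R) • 1 - (β : R) • 1 ∈ S := fun p => by
    simpa using Submodule.smul_mem S (α : R) (hf p p)
  have hYinv : ∀ p, ((β⁻¹ : Rˣ) : R) • (1 - ((α : R) * ((γ⁻¹ : Rˣ) : R)) • f p p)
      - ((β⁻¹ : Rˣ) : R) • 1 ∈ S := fun p => by
    rw [← smul_sub, sub_sub_cancel_left]
    exact Submodule.smul_mem _ _ (neg_mem (Submodule.smul_mem _ _ (hf p p)))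
  have hcancel : ∀ p q, ((α : R) • f p p + (β : R) • 1) * ((α : R) • f q q + (β : R) • 1) *
      ((β⁻¹ : Rˣ) : R) • (1 - ((α : R) * ((γ⁻¹ : Rˣ) : R)) • f p p) - (β : R) • 1 ∈ S :=
    fun p q => by
      simpa using Submodule.mul_sub_smul_one_mem hS
        (Submodule.mul_sub_smul_one_mem hS (hY p) (hY q)) (hYinv p)
  rw [← hbf j k]
  simp only [phiOp, Module.Basis.constr_basis]
  split_ifs <;> apply_rules only [Submodule.smul_mem, hmul, hf, hcancel]

/-- The braid group action `φ` on `T_n` preserves the `R`-submodule spanned by the `n²`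
elements `f_{j,k}`: each `φ(X_i)(f_{j,k})` lies in the span of the `f_{p,q}`. -/
theorem phiOp_preserves_span
    (R T : Type*) [CommRing R] [Ring T] [Algebra R T]
    (n : ℕ) (f : Fin n → Fin n → T) (b : Module.Basis (Option (Fin n × Fin n)) R T)
    (hb1 : b none = 1) (hbf : ∀ j k, b (some (j, k)) = f j k)
    (c α β γ : Rˣ) (hγ : (γ : R) = (β : R) + (c : R) * (α : R))
    (hrel : ∀ i j k l, f i j * f k l = (c : R) • f i l)
    (i : ℕ) (hi : i + 1 < n) (j k : Fin n) :
    phiOp f b c α β γ i hi (f j k) ∈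
      Submodule.span R (Set.range fun p : Fin n × Fin n => f p.1 p.2) :=
  phiOp_preserves_span_general R T n f b hbf c α β γ hrel i hi j k
end

section
/- The matrices B(1) and B(2) each satisfy the cubic minimal polynomial equation (B − I)(B + (1+μ)I)(B + (1+μ)^{-1}I) = 0. -/
open Matrix

/-- The matrix `B(1)` of the handlebody braid representation for `n = 3`. -/
noncomputable def B1 {K : Type*} [Field K] (μ : K) : Matrix (Fin 9) (Fin 9) K :=
  !![-μ ^ 2 / (1 + μ), μ / (1 + μ), 0, -μ, 1, 0, 0, 0, 0;
     μ, 0, 0, 1 + μ, 0, 0, 0, 0, 0;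
     0, 0, μ / (1 + μ), 0, 0, 1, 0, 0, 0;
     -μ / (1 + μ), 1 / (1 + μ), 0, 0, 0, 0, 0, 0, 0;
     1, 0, 0, 0, 0, 0, 0, 0, 0;
     0, 0, 1 / (1 + μ), 0, 0, 0, 0, 0, 0;
     0, 0, 0, 0, 0, 0, -μ, 1, 0;
     0, 0, 0, 0, 0, 0, 1 + μ, 0, 0;
     0, 0, 0, 0, 0, 0, 0, 0, 1]

/-- The matrix `B(2)` of the handlebody braid representation for `n = 3`. -/
noncomputable def B2 {K : Type*} [Field K] (μ : K) : Matrix (Fin 9) (Fin 9) K :=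
  !![1, 0, 0, 0, 0, 0, 0, 0, 0;
     0, -μ, 1, 0, 0, 0, 0, 0, 0;
     0, 1 + μ, 0, 0, 0, 0, 0, 0, 0;
     0, 0, 0, μ / (1 + μ), 0, 0, 1, 0, 0;
     0, 0, 0, 0, -μ ^ 2 / (1 + μ), μ / (1 + μ), 0, -μ, 1;
     0, 0, 0, 0, μ, 0, 0, 1 + μ, 0;
     0, 0, 0, 1 / (1 + μ), 0, 0, 0, 0, 0;
     0, 0, 0, 0, -μ / (1 + μ), 1 / (1 + μ), 0, 0, 0;
     0, 0, 0, 0, 1, 0, 0, 0, 0]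

lemma one9 {K : Type*} [Field K] : (1 : Matrix (Fin 9) (Fin 9) K) =
    !![1,0,0,0,0,0,0,0,0; 0,1,0,0,0,0,0,0,0; 0,0,1,0,0,0,0,0,0;
       0,0,0,1,0,0,0,0,0; 0,0,0,0,1,0,0,0,0; 0,0,0,0,0,1,0,0,0;
       0,0,0,0,0,0,1,0,0; 0,0,0,0,0,0,0,1,0; 0,0,0,0,0,0,0,0,1] := by
  ext i j
  fin_cases i <;> fin_cases j <;> rfl


def D1 {K : Type*} [Field K] (μ : K) : Matrix (Fin 9) (Fin 9) K :=
  !![-μ^2, μ, 0, -μ^2 - μ, μ + 1, 0, 0, 0, 0;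
     μ^2 + μ, 0, 0, μ^2 + 2 * μ + 1, 0, 0, 0, 0, 0;
     0, 0, μ, 0, 0, μ + 1, 0, 0, 0;
     -μ, 1, 0, 0, 0, 0, 0, 0, 0;
     μ + 1, 0, 0, 0, 0, 0, 0, 0, 0;
     0, 0, 1, 0, 0, 0, 0, 0, 0;
     0, 0, 0, 0, 0, 0, -μ^2 - μ, μ + 1, 0;
     0, 0, 0, 0, 0, 0, μ^2 + 2 * μ + 1, 0, 0;
     0, 0, 0, 0, 0, 0, 0, 0, μ + 1]

def D1sq {K : Type*} [Field K] (μ : K) : Matrix (Fin 9) (Fin 9) K :=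
  !![μ^4 + 2 * μ^3 + 3 * μ^2 + 2 * μ + 1, -μ^3 - μ^2 - μ, 0, μ^4 + 2 * μ^3 + 2 * μ^2 + μ, -μ^3 - μ^2, 0, 0, 0, 0;
     -μ^4 - 2 * μ^3 - 2 * μ^2 - μ, μ^3 + 2 * μ^2 + 2 * μ + 1, 0, -μ^4 - 2 * μ^3 - μ^2, μ^3 + 2 * μ^2 + μ, 0, 0, 0, 0;
     0, 0, μ^2 + μ + 1, 0, 0, μ^2 + μ, 0, 0, 0;
     μ^3 + μ^2 + μ, -μ^2, 0, μ^3 + 2 * μ^2 + 2 * μ + 1, -μ^2 - μ, 0, 0, 0, 0;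
     -μ^3 - μ^2, μ^2 + μ, 0, -μ^3 - 2 * μ^2 - μ, μ^2 + 2 * μ + 1, 0, 0, 0, 0;
     0, 0, μ, 0, 0, μ + 1, 0, 0, 0;
     0, 0, 0, 0, 0, 0, μ^4 + 3 * μ^3 + 4 * μ^2 + 3 * μ + 1, -μ^3 - 2 * μ^2 - μ, 0;
     0, 0, 0, 0, 0, 0, -μ^4 - 3 * μ^3 - 3 * μ^2 - μ, μ^3 + 3 * μ^2 + 3 * μ + 1, 0;
     0, 0, 0, 0, 0, 0, 0, 0, μ^2 + 2 * μ + 1]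

def D1cb {K : Type*} [Field K] (μ : K) : Matrix (Fin 9) (Fin 9) K :=
  !![-μ^6 - 4 * μ^5 - 8 * μ^4 - 8 * μ^3 - 4 * μ^2, μ^5 + 3 * μ^4 + 5 * μ^3 + 4 * μ^2 + 2 * μ, 0, -μ^6 - 4 * μ^5 - 8 * μ^4 - 9 * μ^3 - 6 * μ^2 - 2 * μ, μ^5 + 3 * μ^4 + 5 * μ^3 + 5 * μ^2 + 3 * μ + 1, 0, 0, 0, 0;
     μ^6 + 4 * μ^5 + 8 * μ^4 + 9 * μ^3 + 6 * μ^2 + 2 * μ, -μ^5 - 3 * μ^4 - 4 * μ^3 - 2 * μ^2, 0, μ^6 + 4 * μ^5 + 8 * μ^4 + 10 * μ^3 + 8 * μ^2 + 4 * μ + 1, -μ^5 - 3 * μ^4 - 4 * μ^3 - 3 * μ^2 - μ, 0, 0, 0, 0;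
     0, 0, μ^3 + 2 * μ^2 + 2 * μ, 0, 0, μ^3 + 2 * μ^2 + 2 * μ + 1, 0, 0, 0;
     -μ^5 - 3 * μ^4 - 5 * μ^3 - 4 * μ^2 - 2 * μ, μ^4 + 2 * μ^3 + 3 * μ^2 + 2 * μ + 1, 0, -μ^5 - 3 * μ^4 - 4 * μ^3 - 2 * μ^2, μ^4 + 2 * μ^3 + 2 * μ^2 + μ, 0, 0, 0, 0;
     μ^5 + 3 * μ^4 + 5 * μ^3 + 5 * μ^2 + 3 * μ + 1, -μ^4 - 2 * μ^3 - 2 * μ^2 - μ, 0, μ^5 + 3 * μ^4 + 4 * μ^3 + 3 * μ^2 + μ, -μ^4 - 2 * μ^3 - μ^2, 0, 0, 0, 0;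
     0, 0, μ^2 + μ + 1, 0, 0, μ^2 + μ, 0, 0, 0;
     0, 0, 0, 0, 0, 0, -μ^6 - 5 * μ^5 - 11 * μ^4 - 13 * μ^3 - 8 * μ^2 - 2 * μ, μ^5 + 4 * μ^4 + 7 * μ^3 + 7 * μ^2 + 4 * μ + 1, 0;
     0, 0, 0, 0, 0, 0, μ^6 + 5 * μ^5 + 11 * μ^4 + 14 * μ^3 + 11 * μ^2 + 5 * μ + 1, -μ^5 - 4 * μ^4 - 6 * μ^3 - 4 * μ^2 - μ, 0;
     0, 0, 0, 0, 0, 0, 0, 0, μ^3 + 3 * μ^2 + 3 * μ + 1]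

lemma hD1sq {K : Type*} [Field K] (μ : K) : D1 μ * D1 μ = D1sq μ := by
  rw [← Matrix.ext_iff]
  simp only [D1, D1sq, Matrix.mul_apply, Fin.sum_univ_succ, Fin.sum_univ_zero,
    Fin.forall_fin_succ, IsEmpty.forall_iff, and_true,
    Matrix.cons_val_zero, Matrix.cons_val_succ, Matrix.of_apply,
    Matrix.cons_val', Matrix.empty_val', Matrix.cons_val_fin_one, Matrix.head_fin_const,
    Matrix.head_cons, Matrix.add_apply, Matrix.smul_apply, Matrix.zero_apply, smul_eq_mul]
  and_intros <;> ring

lemma hD1cb {K : Type*} [Field K] (μ : K) : D1sq μ * D1 μ = D1cb μ := by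
  rw [← Matrix.ext_iff]
  simp only [D1, D1sq, D1cb, Matrix.mul_apply, Fin.sum_univ_succ, Fin.sum_univ_zero,
    Fin.forall_fin_succ, IsEmpty.forall_iff, and_true,
    Matrix.cons_val_zero, Matrix.cons_val_succ, Matrix.of_apply,
    Matrix.cons_val', Matrix.empty_val', Matrix.cons_val_fin_one, Matrix.head_fin_const,
    Matrix.head_cons, Matrix.add_apply, Matrix.smul_apply, Matrix.zero_apply, smul_eq_mul]
  and_intros <;> ring

lemma hLD1 {K : Type*} [Field K] (μ : K) :
    D1cb μ + ((1+μ)^2 - (1+μ) + 1) • D1sq μ + ((1+μ)^2 - (1+μ) - (1+μ)^3) • D1 μ +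
      (-(1+μ)^3) • (1 : Matrix (Fin 9) (Fin 9) K) = 0 := by
  rw [one9, ← Matrix.ext_iff]
  simp only [D1, D1sq, D1cb, Matrix.mul_apply, Fin.sum_univ_succ, Fin.sum_univ_zero,
    Fin.forall_fin_succ, IsEmpty.forall_iff, and_true,
    Matrix.cons_val_zero, Matrix.cons_val_succ, Matrix.of_apply,
    Matrix.cons_val', Matrix.empty_val', Matrix.cons_val_fin_one, Matrix.head_fin_const,
    Matrix.head_cons, Matrix.add_apply, Matrix.smul_apply, Matrix.zero_apply, smul_eq_mul]
  and_intros <;> ring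

lemma hBD1 {K : Type*} [Field K] (μ : K) (h : 1 + μ ≠ 0) :
    B1 μ = (1+μ)⁻¹ • D1 μ := by
  rw [← Matrix.ext_iff]
  simp only [B1, D1, Matrix.mul_apply, Fin.sum_univ_succ, Fin.sum_univ_zero,
    Fin.forall_fin_succ, IsEmpty.forall_iff, and_true,
    Matrix.cons_val_zero, Matrix.cons_val_succ, Matrix.of_apply,
    Matrix.cons_val', Matrix.empty_val', Matrix.cons_val_fin_one, Matrix.head_fin_const,
    Matrix.head_cons, Matrix.add_apply, Matrix.smul_apply, Matrix.zero_apply, smul_eq_mul]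
  and_intros <;> field_simp <;> ring

lemma cubicD1 {K : Type*} [Field K] (μ : K) (h : 1 + μ ≠ 0) :
    (B1 μ - 1) * (B1 μ + (1 + μ) • (1 : Matrix (Fin 9) (Fin 9) K)) *
        (B1 μ + (1 + μ)⁻¹ • (1 : Matrix (Fin 9) (Fin 9) K)) = 0 := by
  have f1 : B1 μ - 1 = (1+μ)⁻¹ • (D1 μ - (1+μ) • 1) := by
    rw [hBD1 μ h, smul_sub, smul_smul, inv_mul_cancel₀ h, one_smul]
  have f2 : B1 μ + (1 + μ) • (1 : Matrix (Fin 9) (Fin 9) K) =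
      (1+μ)⁻¹ • (D1 μ + ((1+μ)^2) • 1) := by
    rw [hBD1 μ h, smul_add, smul_smul, show ((1+μ):K)⁻¹ * (1+μ)^2 = 1+μ by
      field_simp]
  have f3 : B1 μ + (1 + μ)⁻¹ • (1 : Matrix (Fin 9) (Fin 9) K) =
      (1+μ)⁻¹ • (D1 μ + 1) := by
    rw [hBD1 μ h, smul_add]
  have expand : (D1 μ - (1+μ) • 1) * (D1 μ + ((1+μ)^2) • 1) * (D1 μ + 1) =
      D1 μ * D1 μ * D1 μ + ((1+μ)^2 - (1+μ) + 1) • (D1 μ * D1 μ) +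
      ((1+μ)^2 - (1+μ) - (1+μ)^3) • D1 μ + (-(1+μ)^3) • (1 : Matrix (Fin 9) (Fin 9) K) := by
    simp only [sub_mul, mul_add, add_mul, smul_mul_assoc, mul_smul_comm, one_mul, mul_one,
      smul_smul, smul_add, smul_sub]
    module
  have key : (D1 μ - (1+μ) • 1) * (D1 μ + ((1+μ)^2) • 1) * (D1 μ + 1) = 0 := by
    rw [expand, hD1sq, hD1cb, hLD1]
  rw [f1, f2, f3]
  simp only [smul_mul_assoc, mul_smul_comm, smul_smul]
  rw [key, smul_zero]


def D2 {K : Type*} [Field K] (μ : K) : Matrix (Fin 9) (Fin 9) K :=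
  !![μ + 1, 0, 0, 0, 0, 0, 0, 0, 0;
     0, -μ^2 - μ, μ + 1, 0, 0, 0, 0, 0, 0;
     0, μ^2 + 2 * μ + 1, 0, 0, 0, 0, 0, 0, 0;
     0, 0, 0, μ, 0, 0, μ + 1, 0, 0;
     0, 0, 0, 0, -μ^2, μ, 0, -μ^2 - μ, μ + 1;
     0, 0, 0, 0, μ^2 + μ, 0, 0, μ^2 + 2 * μ + 1, 0;
     0, 0, 0, 1, 0, 0, 0, 0, 0;
     0, 0, 0, 0, -μ, 1, 0, 0, 0;
     0, 0, 0, 0, μ + 1, 0, 0, 0, 0]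

def D2sq {K : Type*} [Field K] (μ : K) : Matrix (Fin 9) (Fin 9) K :=
  !![μ^2 + 2 * μ + 1, 0, 0, 0, 0, 0, 0, 0, 0;
     0, μ^4 + 3 * μ^3 + 4 * μ^2 + 3 * μ + 1, -μ^3 - 2 * μ^2 - μ, 0, 0, 0, 0, 0, 0;
     0, -μ^4 - 3 * μ^3 - 3 * μ^2 - μ, μ^3 + 3 * μ^2 + 3 * μ + 1, 0, 0, 0, 0, 0, 0;
     0, 0, 0, μ^2 + μ + 1, 0, 0, μ^2 + μ, 0, 0;
     0, 0, 0, 0, μ^4 + 2 * μ^3 + 3 * μ^2 + 2 * μ + 1, -μ^3 - μ^2 - μ, 0, μ^4 + 2 * μ^3 + 2 * μ^2 + μ, -μ^3 - μ^2;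
     0, 0, 0, 0, -μ^4 - 2 * μ^3 - 2 * μ^2 - μ, μ^3 + 2 * μ^2 + 2 * μ + 1, 0, -μ^4 - 2 * μ^3 - μ^2, μ^3 + 2 * μ^2 + μ;
     0, 0, 0, μ, 0, 0, μ + 1, 0, 0;
     0, 0, 0, 0, μ^3 + μ^2 + μ, -μ^2, 0, μ^3 + 2 * μ^2 + 2 * μ + 1, -μ^2 - μ;
     0, 0, 0, 0, -μ^3 - μ^2, μ^2 + μ, 0, -μ^3 - 2 * μ^2 - μ, μ^2 + 2 * μ + 1]

def D2cb {K : Type*} [Field K] (μ : K) : Matrix (Fin 9) (Fin 9) K :=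
  !![μ^3 + 3 * μ^2 + 3 * μ + 1, 0, 0, 0, 0, 0, 0, 0, 0;
     0, -μ^6 - 5 * μ^5 - 11 * μ^4 - 13 * μ^3 - 8 * μ^2 - 2 * μ, μ^5 + 4 * μ^4 + 7 * μ^3 + 7 * μ^2 + 4 * μ + 1, 0, 0, 0, 0, 0, 0;
     0, μ^6 + 5 * μ^5 + 11 * μ^4 + 14 * μ^3 + 11 * μ^2 + 5 * μ + 1, -μ^5 - 4 * μ^4 - 6 * μ^3 - 4 * μ^2 - μ, 0, 0, 0, 0, 0, 0;
     0, 0, 0, μ^3 + 2 * μ^2 + 2 * μ, 0, 0, μ^3 + 2 * μ^2 + 2 * μ + 1, 0, 0;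
     0, 0, 0, 0, -μ^6 - 4 * μ^5 - 8 * μ^4 - 8 * μ^3 - 4 * μ^2, μ^5 + 3 * μ^4 + 5 * μ^3 + 4 * μ^2 + 2 * μ, 0, -μ^6 - 4 * μ^5 - 8 * μ^4 - 9 * μ^3 - 6 * μ^2 - 2 * μ, μ^5 + 3 * μ^4 + 5 * μ^3 + 5 * μ^2 + 3 * μ + 1;
     0, 0, 0, 0, μ^6 + 4 * μ^5 + 8 * μ^4 + 9 * μ^3 + 6 * μ^2 + 2 * μ, -μ^5 - 3 * μ^4 - 4 * μ^3 - 2 * μ^2, 0, μ^6 + 4 * μ^5 + 8 * μ^4 + 10 * μ^3 + 8 * μ^2 + 4 * μ + 1, -μ^5 - 3 * μ^4 - 4 * μ^3 - 3 * μ^2 - μ;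
     0, 0, 0, μ^2 + μ + 1, 0, 0, μ^2 + μ, 0, 0;
     0, 0, 0, 0, -μ^5 - 3 * μ^4 - 5 * μ^3 - 4 * μ^2 - 2 * μ, μ^4 + 2 * μ^3 + 3 * μ^2 + 2 * μ + 1, 0, -μ^5 - 3 * μ^4 - 4 * μ^3 - 2 * μ^2, μ^4 + 2 * μ^3 + 2 * μ^2 + μ;
     0, 0, 0, 0, μ^5 + 3 * μ^4 + 5 * μ^3 + 5 * μ^2 + 3 * μ + 1, -μ^4 - 2 * μ^3 - 2 * μ^2 - μ, 0, μ^5 + 3 * μ^4 + 4 * μ^3 + 3 * μ^2 + μ, -μ^4 - 2 * μ^3 - μ^2]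

lemma hD2sq {K : Type*} [Field K] (μ : K) : D2 μ * D2 μ = D2sq μ := by
  rw [← Matrix.ext_iff]
  simp only [D2, D2sq, Matrix.mul_apply, Fin.sum_univ_succ, Fin.sum_univ_zero,
    Fin.forall_fin_succ, IsEmpty.forall_iff, and_true,
    Matrix.cons_val_zero, Matrix.cons_val_succ, Matrix.of_apply,
    Matrix.cons_val', Matrix.empty_val', Matrix.cons_val_fin_one, Matrix.head_fin_const,
    Matrix.head_cons, Matrix.add_apply, Matrix.smul_apply, Matrix.zero_apply, smul_eq_mul]
  and_intros <;> ring

lemma hD2cb {K : Type*} [Field K] (μ : K) : D2sq μ * D2 μ = D2cb μ := by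
  rw [← Matrix.ext_iff]
  simp only [D2, D2sq, D2cb, Matrix.mul_apply, Fin.sum_univ_succ, Fin.sum_univ_zero,
    Fin.forall_fin_succ, IsEmpty.forall_iff, and_true,
    Matrix.cons_val_zero, Matrix.cons_val_succ, Matrix.of_apply,
    Matrix.cons_val', Matrix.empty_val', Matrix.cons_val_fin_one, Matrix.head_fin_const,
    Matrix.head_cons, Matrix.add_apply, Matrix.smul_apply, Matrix.zero_apply, smul_eq_mul]
  and_intros <;> ring

lemma hLD2 {K : Type*} [Field K] (μ : K) :
    D2cb μ + ((1+μ)^2 - (1+μ) + 1) • D2sq μ + ((1+μ)^2 - (1+μ) - (1+μ)^3) • D2 μ +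
      (-(1+μ)^3) • (1 : Matrix (Fin 9) (Fin 9) K) = 0 := by
  rw [one9, ← Matrix.ext_iff]
  simp only [D2, D2sq, D2cb, Matrix.mul_apply, Fin.sum_univ_succ, Fin.sum_univ_zero,
    Fin.forall_fin_succ, IsEmpty.forall_iff, and_true,
    Matrix.cons_val_zero, Matrix.cons_val_succ, Matrix.of_apply,
    Matrix.cons_val', Matrix.empty_val', Matrix.cons_val_fin_one, Matrix.head_fin_const,
    Matrix.head_cons, Matrix.add_apply, Matrix.smul_apply, Matrix.zero_apply, smul_eq_mul]
  and_intros <;> ring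

lemma hBD2 {K : Type*} [Field K] (μ : K) (h : 1 + μ ≠ 0) :
    B2 μ = (1+μ)⁻¹ • D2 μ := by
  rw [← Matrix.ext_iff]
  simp only [B2, D2, Matrix.mul_apply, Fin.sum_univ_succ, Fin.sum_univ_zero,
    Fin.forall_fin_succ, IsEmpty.forall_iff, and_true,
    Matrix.cons_val_zero, Matrix.cons_val_succ, Matrix.of_apply,
    Matrix.cons_val', Matrix.empty_val', Matrix.cons_val_fin_one, Matrix.head_fin_const,
    Matrix.head_cons, Matrix.add_apply, Matrix.smul_apply, Matrix.zero_apply, smul_eq_mul]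
  and_intros <;> field_simp <;> ring

lemma cubicD2 {K : Type*} [Field K] (μ : K) (h : 1 + μ ≠ 0) :
    (B2 μ - 1) * (B2 μ + (1 + μ) • (1 : Matrix (Fin 9) (Fin 9) K)) *
        (B2 μ + (1 + μ)⁻¹ • (1 : Matrix (Fin 9) (Fin 9) K)) = 0 := by
  have f1 : B2 μ - 1 = (1+μ)⁻¹ • (D2 μ - (1+μ) • 1) := by
    rw [hBD2 μ h, smul_sub, smul_smul, inv_mul_cancel₀ h, one_smul]
  have f2 : B2 μ + (1 + μ) • (1 : Matrix (Fin 9) (Fin 9) K) =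
      (1+μ)⁻¹ • (D2 μ + ((1+μ)^2) • 1) := by
    rw [hBD2 μ h, smul_add, smul_smul, show ((1+μ):K)⁻¹ * (1+μ)^2 = 1+μ by
      field_simp]
  have f3 : B2 μ + (1 + μ)⁻¹ • (1 : Matrix (Fin 9) (Fin 9) K) =
      (1+μ)⁻¹ • (D2 μ + 1) := by
    rw [hBD2 μ h, smul_add]
  have expand : (D2 μ - (1+μ) • 1) * (D2 μ + ((1+μ)^2) • 1) * (D2 μ + 1) =
      D2 μ * D2 μ * D2 μ + ((1+μ)^2 - (1+μ) + 1) • (D2 μ * D2 μ) +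
      ((1+μ)^2 - (1+μ) - (1+μ)^3) • D2 μ + (-(1+μ)^3) • (1 : Matrix (Fin 9) (Fin 9) K) := by
    simp only [sub_mul, mul_add, add_mul, smul_mul_assoc, mul_smul_comm, one_mul, mul_one,
      smul_smul, smul_add, smul_sub]
    module
  have key : (D2 μ - (1+μ) • 1) * (D2 μ + ((1+μ)^2) • 1) * (D2 μ + 1) = 0 := by
    rw [expand, hD2sq, hD2cb, hLD2]
  rw [f1, f2, f3]
  simp only [smul_mul_assoc, mul_smul_comm, smul_smul]
  rw [key, smul_zero]


/-- `B(1)` and `B(2)` each satisfy the cubic equation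
`(B - I)(B + (1+μ)I)(B + (1+μ)⁻¹I) = 0`. -/
theorem B1_B2_cubic {K : Type*} [Field K] (μ : K) (hμ : μ ≠ 0) (h : 1 + μ ≠ 0) :
    (B1 μ - 1) * (B1 μ + (1 + μ) • (1 : Matrix (Fin 9) (Fin 9) K)) *
        (B1 μ + (1 + μ)⁻¹ • (1 : Matrix (Fin 9) (Fin 9) K)) = 0 ∧
    (B2 μ - 1) * (B2 μ + (1 + μ) • (1 : Matrix (Fin 9) (Fin 9) K)) *
        (B2 μ + (1 + μ)⁻¹ • (1 : Matrix (Fin 9) (Fin 9) K)) = 0 := by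
  exact ⟨cubicD1 μ h, cubicD2 μ h⟩
end

section
/- If the parameter conditions hold (β_i = β for all i, c_{i,j} = c for all i,j, and α_i c_{i,i} constant), then all φ(X_i) fix the identity element 1 of T_n and act trivially on the quotient T_n / span{f_{i,j}}; i.e., the representation of B_n on T_n decomposes as the direct sum of the trivial 1-dimensional representation on R·1 and an n²-dimensional representation on span{f_{i,j}}. -/
/-!
The relations `f_{i,j} f_{k,l} = c f_{i,l}` make the span `S` of the `f_{j,k}` closed under
multiplication, so modulo `S` the constant terms of elements of `T = R·1 ⊕ S` multiply. Every
`φ(X_i)(f_{j,k})` is a product of `f`'s and of `α⁻¹ (Y_i Y_{i+1} Y_i⁻¹ - β)`, whose constant term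
is `α⁻¹ (β β β⁻¹ - β) = 0`; hence `φ(X_i)` maps `S` into itself, while it fixes `1` by construction.
-/

section Semiring

variable {R : Type*} [CommSemiring R]

theorem Module.Basis.isCompl_span_none_span_some {M ι : Type*} [AddCommMonoid M] [Module R M]
    (b : Module.Basis (Option ι) R M) :
    IsCompl (Submodule.span R {b none}) (Submodule.span R (Set.range (b ∘ some))) := by
  simpa [Set.image_singleton, Set.range_comp] using
    b.linearIndependent.isCompl_span_image b.span_eq (Set.isCompl_range_some_none ι).symm

theorem Submodule.mul_mem_span_of_mul_mem {T : Type*} [Semiring T] [Algebra R T] {s : Set T}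
    (hs : ∀ x ∈ s, ∀ y ∈ s, x * y ∈ span R s) {x y : T}
    (hx : x ∈ span R s) (hy : y ∈ span R s) : x * y ∈ span R s := by
  have hle : span R s * span R s ≤ span R s := by
    rw [span_mul_span, span_le]
    rintro _ ⟨x, hx, y, hy, rfl⟩
    exact hs x hx y hy
  exact hle (mul_mem_mul hx hy)

end Semiring

section Ring

variable {R T : Type*} [CommRing R] [Ring T] [Algebra R T] {S : Submodule R T}

theorem Submodule.mul_sub_smul_one_mem_s16 (hS : ∀ x ∈ S, ∀ y ∈ S, x * y ∈ S)
    {x y : T} {r s : R} (hx : x - r • 1 ∈ S) (hy : y - s • 1 ∈ S) :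
    x * y - (r * s) • 1 ∈ S := by
  have expand : x * y - (r * s) • 1 =
      (x - r • 1) * (y - s • 1) + r • (y - s • 1) + s • (x - r • 1) := by
    simp only [sub_mul, mul_sub, smul_mul_assoc, mul_smul_comm, smul_sub, smul_smul, mul_one,
      one_mul]
    module
  rw [expand]
  exact add_mem (add_mem (hS _ hx _ hy) (S.smul_mem r hy)) (S.smul_mem s hx)

/-- For `a = f_{i,i}`, `a' = f_{i+1,i+1}`, `u = α⁻¹`, `p = q = α`, `t = α γ⁻¹` the element is
`α⁻¹ (Y_i Y_{i+1} Y_i⁻¹ - β)`. -/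
theorem Submodule.smul_mul_mul_sub_smul_one_mem (hS : ∀ x ∈ S, ∀ y ∈ S, x * y ∈ S)
    (u p q t : R) (β : Rˣ) {a a' : T} (ha : a ∈ S) (ha' : a' ∈ S) :
    u • ((p • a + (β : R) • 1) * (q • a' + (β : R) • 1) *
      ((β⁻¹ : Rˣ) : R) • (1 - t • a) - (β : R) • 1) ∈ S := by
  have hY : ∀ {x} (r : R), x ∈ S → r • x + (β : R) • 1 - (β : R) • 1 ∈ S := fun r hx => by
    simpa using S.smul_mem r hx
  have hYinv : ((β⁻¹ : Rˣ) : R) • (1 - t • a) - ((β⁻¹ : Rˣ) : R) • 1 ∈ S := by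
    simpa [smul_sub, smul_smul] using S.smul_mem (-(((β⁻¹ : Rˣ) : R) * t)) ha
  have hconst := mul_sub_smul_one_mem_s16 hS (mul_sub_smul_one_mem_s16 hS (hY p ha) (hY q ha')) hYinv
  rw [Units.mul_inv_cancel_right] at hconst
  exact S.smul_mem u hconst

end Ring

theorem phiOp_apply_one {R T : Type*} [CommRing R] [Ring T] [Algebra R T]
    {n : ℕ} (f : Fin n → Fin n → T) (b : Module.Basis (Option (Fin n × Fin n)) R T)
    (hb1 : b none = 1) (c α β γ : Rˣ) (i : ℕ) (hi : i + 1 < n) :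
    phiOp f b c α β γ i hi 1 = 1 := by
  rw [← hb1, phiOp, Module.Basis.constr_basis, hb1]

theorem phiOp_apply_mem_span {R T : Type*} [CommRing R] [Ring T] [Algebra R T]
    {n : ℕ} (f : Fin n → Fin n → T) (b : Module.Basis (Option (Fin n × Fin n)) R T)
    (hbf : ∀ j k, b (some (j, k)) = f j k) (c α β γ : Rˣ)
    (hrel : ∀ i j k l, f i j * f k l = (c : R) • f i l) (i : ℕ) (hi : i + 1 < n) (j k : Fin n) :
    phiOp f b c α β γ i hi (f j k) ∈
      Submodule.span R (Set.range fun p : Fin n × Fin n => f p.1 p.2) := by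
  set S := Submodule.span R (Set.range fun p : Fin n × Fin n => f p.1 p.2)
  have hf : ∀ j k, f j k ∈ S := fun j k => Submodule.subset_span ⟨(j, k), rfl⟩
  have hS : ∀ x ∈ S, ∀ y ∈ S, x * y ∈ S := fun x hx y hy =>
    Submodule.mul_mem_span_of_mul_mem (by
      rintro _ ⟨⟨j, k⟩, rfl⟩ _ ⟨⟨l, m⟩, rfl⟩
      simpa [hrel] using S.smul_mem (c : R) (hf j m)) hx hy
  rw [← hbf, phiOp, Module.Basis.constr_basis]
  dsimp only
  split_ifs <;>
    repeat' first
      | exact S.smul_mul_mul_sub_smul_one_mem hS _ _ _ _ _ (hf _ _) (hf _ _)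
      | exact hf _ _
      | apply S.smul_mem
      | apply hS

theorem phiOp_decomposition_general
    (R T : Type*) [CommRing R] [Ring T] [Algebra R T]
    (n : ℕ) (f : Fin n → Fin n → T) (b : Module.Basis (Option (Fin n × Fin n)) R T)
    (hb1 : b none = 1) (hbf : ∀ j k, b (some (j, k)) = f j k)
    (c α β γ : Rˣ)
    (hrel : ∀ i j k l, f i j * f k l = (c : R) • f i l) :
    (∀ i : ℕ, ∀ hi : i + 1 < n, phiOp f b c α β γ i hi 1 = 1) ∧
    (∀ i : ℕ, ∀ hi : i + 1 < n, ∀ j k : Fin n,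
      phiOp f b c α β γ i hi (f j k) ∈
        Submodule.span R (Set.range fun p : Fin n × Fin n => f p.1 p.2)) ∧
    IsCompl (Submodule.span R {(1 : T)})
      (Submodule.span R (Set.range fun p : Fin n × Fin n => f p.1 p.2)) := by
  refine ⟨phiOp_apply_one f b hb1 c α β γ, phiOp_apply_mem_span f b hbf c α β γ hrel, ?_⟩
  have hf : (fun p : Fin n × Fin n => f p.1 p.2) = b ∘ some :=
    funext fun p => (hbf p.1 p.2).symm
  rw [hf, ← hb1]
  exact b.isCompl_span_none_span_some

/-- All `φ(X_i)` fix the identity `1` of `T_n`, preserve the span `S` of the `f_{j,k}`,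
and `T_n = R·1 ⊕ S`: the representation of `B_n` on `T_n` decomposes as the direct sum
of the trivial one-dimensional representation on `R·1` and an `n²`-dimensional
representation on `S`. -/
theorem phiOp_decomposition
    (R T : Type*) [CommRing R] [Ring T] [Algebra R T]
    (n : ℕ) (f : Fin n → Fin n → T) (b : Module.Basis (Option (Fin n × Fin n)) R T)
    (hb1 : b none = 1) (hbf : ∀ j k, b (some (j, k)) = f j k)
    (c α β γ : Rˣ) (hγ : (γ : R) = (β : R) + (c : R) * (α : R))
    (hrel : ∀ i j k l, f i j * f k l = (c : R) • f i l) :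
    (∀ i : ℕ, ∀ hi : i + 1 < n, phiOp f b c α β γ i hi 1 = 1) ∧
    (∀ i : ℕ, ∀ hi : i + 1 < n, ∀ j k : Fin n,
      phiOp f b c α β γ i hi (f j k) ∈
        Submodule.span R (Set.range fun p : Fin n × Fin n => f p.1 p.2)) ∧
    IsCompl (Submodule.span R {(1 : T)})
      (Submodule.span R (Set.range fun p : Fin n × Fin n => f p.1 p.2)) :=
  phiOp_decomposition_general R T n f b hb1 hbf c α β γ hrel
end

section
/- In T_n with all c_{i,j} = c invertible and Y_j = α f_{j,j} + β (α, β, β+cα invertible), the conjugate Y_i Y_{i+1} Y_i^{-1} equals β + α·g where g is an explicit linear combination of 1, f_{i,i}, f_{i+1,i+1}, f_{i,i+1}, f_{i+1,i} (involving ν = cα(β + cα)^{-1}); in particular Y_i Y_{i+1} Y_i^{-1} − β lies in the span of {f_{i,i}, f_{i+1,i+1}, f_{i,i+1}, f_{i+1,i}, 1}. -/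
/-- In `T_n` with all `c_{i,j} = c` and `Y_j = α f_{j,j} + β` (with `α`, `β`, `β + cα`
invertible and `Y_i⁻¹ = β⁻¹(1 - α(β + cα)⁻¹ f_{i,i})`), the element
`Y_i Y_{i+1} Y_i⁻¹ - β` lies in the span of `{f_{i,i}, f_{i+1,i+1}, f_{i,i+1}, f_{i+1,i}, 1}`. -/
theorem conjugate_in_span
    (R : Type*) [CommRing R] (n : ℕ) (c α β γ : Rˣ)
    (hγ : (γ : R) = (β : R) + (c : R) * (α : R))
    (T : Type*) [Ring T] [Algebra R T] (f : Fin n → Fin n → T)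
    (hrel : ∀ i j k l, f i j * f k l = (c : R) • f i l)
    (i : ℕ) (hi : i + 1 < n) :
    let ii : Fin n := ⟨i, Nat.lt_of_succ_lt hi⟩
    let jj : Fin n := ⟨i + 1, hi⟩
    let Y : Fin n → T := fun k => (α : R) • f k k + (β : R) • 1
    let Yinv : Fin n → T := fun k =>
      ((β⁻¹ : Rˣ) : R) • (1 - ((α : R) * ((γ⁻¹ : Rˣ) : R)) • f k k)
    Y ii * Y jj * Yinv ii - (β : R) • 1 ∈
      Submodule.span R ({f ii ii, f jj jj, f ii jj, f jj ii, 1} : Set T) := by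
  intro ii jj Y Yinv
  set S := Submodule.span R ({f ii ii, f jj jj, f ii jj, f jj ii, 1} : Set T) with hS
  have h1 : (1 : T) ∈ S := Submodule.subset_span (by simp)
  have hx : f ii ii ∈ S := Submodule.subset_span (by simp)
  have hy : f jj jj ∈ S := Submodule.subset_span (by simp)
  have hmul : ∀ x ∈ S, ∀ y ∈ S, x * y ∈ S := by
    intro x hxm
    induction hxm using Submodule.span_induction with
    | mem g hg =>
      intro y hym
      induction hym using Submodule.span_induction with
      | mem t ht =>
        simp only [Set.mem_insert_iff, Set.mem_singleton_iff] at hg ht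
        rcases hg with rfl | rfl | rfl | rfl | rfl <;>
          rcases ht with rfl | rfl | rfl | rfl | rfl <;>
          simp only [hrel, one_mul, mul_one] <;>
          first
            | exact Submodule.smul_mem _ _ (Submodule.subset_span (by simp))
            | exact Submodule.subset_span (by simp)
      | zero => simpa using S.zero_mem
      | add a b _ _ ha hb => rw [mul_add]; exact S.add_mem ha hb
      | smul r a _ ha => rw [mul_smul_comm]; exact S.smul_mem r ha
    | zero => intro y hym; simpa using S.zero_mem
    | add a b _ _ ha hb => intro y hym; rw [add_mul]; exact S.add_mem (ha y hym) (hb y hym)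
    | smul r a _ ha => intro y hym; rw [smul_mul_assoc]; exact S.smul_mem r (ha y hym)
  have hYi : Y ii ∈ S := S.add_mem (S.smul_mem _ hx) (S.smul_mem _ h1)
  have hYj : Y jj ∈ S := S.add_mem (S.smul_mem _ hy) (S.smul_mem _ h1)
  have hYinv : Yinv ii ∈ S := S.smul_mem _ (S.sub_mem h1 (S.smul_mem _ hx))
  exact S.sub_mem (hmul _ (hmul _ hYi _ hYj) _ hYinv) (S.smul_mem _ h1)
end
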